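/- arXiv:2605.18103 — 2 statements merged into one kernel-verified Lean document; each statement's English description precedes it below -/
import Mathlib

section
/- Let X be a normed vector space with a closed generating cone X₊, and suppose a linear map f : X → X satisfies f[X₊] ⊆ X₊ ∪ (−X₊) but is neither positive nor the negative of a positive map. Then f has rank at most one, i.e., there exist a linear functional ψ on X and u ∈ X with f(x) = ψ(x)·u for all x. -/
/-!
Since `f` maps `X₊` into `X₊ ∪ -X₊` and segments of `X₊` into segments, a segment from
`f p ∈ X₊` to `f q ∈ -X₊` is a connected set covered by the closed sets `X₊` and `-X₊`; it
therefore meets `X₊ ∩ -X₊ = {0}`, so `f p` and `f q` are proportional. Comparing every `f p`,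
`p ∈ X₊`, with the nonzero `f y ∈ -X₊` (directly if `f p ∈ X₊`, through the nonzero `f x ∈ X₊`
otherwise) puts `f[X₊]` on the line through `f y`, and since `X₊` is generating, so is `f[X]`.
-/

/-- A (pointed) cone in a real vector space. -/
def IsCone {X : Type*} [AddCommGroup X] [Module ℝ X] (K : Set X) : Prop :=
  0 ∈ K ∧ (∀ x ∈ K, ∀ y ∈ K, x + y ∈ K) ∧
    (∀ (c : ℝ), 0 ≤ c → ∀ x ∈ K, c • x ∈ K) ∧ K ∩ (-K) ⊆ {0}

lemma IsCone.convex {X : Type*} [AddCommGroup X] [Module ℝ X] {K : Set X} (hK : IsCone K) :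
    Convex ℝ K :=
  fun _ hx _ hy a b ha hb _ => hK.2.1 _ (hK.2.2.1 a ha _ hx) _ (hK.2.2.1 b hb _ hy)

lemma zero_mem_segment_of_segment_subset_union {X : Type*} [AddCommGroup X] [Module ℝ X]
    [TopologicalSpace X] [IsTopologicalAddGroup X] [ContinuousSMul ℝ X]
    {K : Set X} (hclosed : IsClosed K) (hpointed : K ∩ -K ⊆ {0}) {a b : X}
    (ha : a ∈ K) (hb : b ∈ -K) (hseg : segment ℝ a b ⊆ K ∪ -K) :
    (0 : X) ∈ segment ℝ a b := by
  obtain ⟨z, hz, hzK⟩ := isPreconnected_closed_iff.1 (convex_segment a b).isPreconnected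
    K (-K) hclosed hclosed.neg hseg ⟨a, left_mem_segment ℝ a b, ha⟩
    ⟨b, right_mem_segment ℝ a b, hb⟩
  rwa [← hpointed hzK]

lemma mem_span_singleton_of_zero_mem_segment {X : Type*} [AddCommGroup X] [Module ℝ X]
    {a b : X} (h : (0 : X) ∈ segment ℝ a b) (ha : a ≠ 0) : b ∈ ℝ ∙ a := by
  rw [mem_segment_iff_sameRay, zero_sub, sub_zero] at h
  obtain ⟨r, -, hr⟩ := h.exists_nonneg_left (neg_ne_zero.2 ha)
  rw [← hr, smul_neg]
  exact neg_mem (Submodule.smul_mem _ r (Submodule.mem_span_singleton_self a))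

lemma LinearMap.exists_eq_smul_of_forall_mem_span_singleton {K M N : Type*} [Field K]
    [AddCommGroup M] [Module K M] [AddCommGroup N] [Module K N] (f : M →ₗ[K] N) {u : N}
    (hf : ∀ x, f x ∈ K ∙ u) : ∃ ψ : M →ₗ[K] K, ∀ x, f x = ψ x • u := by
  by_cases hu : u = 0
  · subst hu
    exact ⟨0, fun x => by simpa using hf x⟩
  · exact ⟨(LinearEquiv.coord K N u hu).toLinearMap.comp (f.codRestrict _ hf),
      fun x => (LinearEquiv.coord_apply_smul K N u hu ⟨f x, hf x⟩).symm⟩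

theorem stmt3 {X : Type*} [NormedAddCommGroup X] [NormedSpace ℝ X]
    (Xp : Set X) (hK : IsCone Xp) (hclosed : IsClosed Xp)
    (hgen : ∀ x : X, ∃ a ∈ Xp, ∃ b ∈ Xp, x = a - b)
    (f : X →ₗ[ℝ] X)
    (hmap : ∀ x ∈ Xp, f x ∈ Xp ∪ (-Xp))
    (hx : ∃ x ∈ Xp, f x ≠ 0 ∧ f x ∈ Xp)
    (hy : ∃ y ∈ Xp, f y ≠ 0 ∧ f y ∈ -Xp) :
    ∃ (ψ : X →ₗ[ℝ] ℝ) (u : X), ∀ x, f x = ψ x • u := by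
  obtain ⟨x₀, hx₀, hfx₀, hfx₀K⟩ := hx
  obtain ⟨y₀, hy₀, hfy₀, hfy₀K⟩ := hy
  have hseg : ∀ p ∈ Xp, ∀ q ∈ Xp, f p ∈ Xp → f q ∈ -Xp → (0 : X) ∈ segment ℝ (f p) (f q) :=
    fun p hp q hq hfp hfq =>
      zero_mem_segment_of_segment_subset_union hclosed hK.2.2.2 hfp hfq <| by
        rw [← LinearMap.coe_toAffineMap, ← image_segment, Set.image_subset_iff]
        exact fun z hz => hmap z (hK.convex.segment_subset hp hq hz)
  have hcone : ∀ p ∈ Xp, f p ∈ ℝ ∙ f y₀ := by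
    intro p hp
    rcases hmap p hp with hfp | hfp
    · exact mem_span_singleton_of_zero_mem_segment
        (segment_symm ℝ (f p) (f y₀) ▸ hseg p hp y₀ hy₀ hfp hfy₀K) hfy₀
    · have hx₀y₀ : f x₀ ∈ ℝ ∙ f y₀ := mem_span_singleton_of_zero_mem_segment
        (segment_symm ℝ (f x₀) (f y₀) ▸ hseg x₀ hx₀ y₀ hy₀ hfx₀K hfy₀K) hfy₀
      exact (Submodule.span_singleton_le_iff_mem _ _).2 hx₀y₀
        (mem_span_singleton_of_zero_mem_segment (hseg x₀ hx₀ p hp hfx₀K hfp) hfx₀)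
  obtain ⟨ψ, hψ⟩ := f.exists_eq_smul_of_forall_mem_span_singleton (u := f y₀) fun x => by
    obtain ⟨a, ha, b, hb, rfl⟩ := hgen x
    exact map_sub f a b ▸ sub_mem (hcone a ha) (hcone b hb)
  exact ⟨ψ, f y₀, hψ⟩
end

section
/- Let X be a vector space and T = c·P₂(f) : X⁽²⁾ → X⁽²⁾ with c ≠ 0 and f : X → X linear. If T is Drazin invertible with index k, then f is Drazin invertible with Ind(f) ≤ k, and T^D = (1/c)·P₂(f^D). Consequently, if T is rank-one non-increasing and Drazin invertible, then T^D is rank-one non-increasing. -/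
open TensorProduct

/-- The second symmetric product space `X⁽²⁾`: the symmetric tensors in `X ⊗ X`. -/
noncomputable def sym2Space (X : Type*) [AddCommGroup X] [Module ℝ X] :
    Submodule ℝ (X ⊗[ℝ] X) :=
  LinearMap.eqLocus (TensorProduct.comm ℝ X X).toLinearMap LinearMap.id

lemma tmul_self_mem_sym2Space {X : Type*} [AddCommGroup X] [Module ℝ X] (x : X) :
    x ⊗ₜ[ℝ] x ∈ sym2Space X := by
  simp [sym2Space, LinearMap.mem_eqLocus]

/-- The decomposable element `x ⊗ x` viewed in `X⁽²⁾`. -/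
noncomputable def sq2 {X : Type*} [AddCommGroup X] [Module ℝ X] (x : X) : sym2Space X :=
  ⟨x ⊗ₜ[ℝ] x, tmul_self_mem_sym2Space x⟩

/-- The Drazin equations `TᵏST = Tᵏ`, `STS = S`, `TS = ST`. -/
def DrazinTriple {M : Type*} [AddCommGroup M] [Module ℝ M]
    (T S : Module.End ℝ M) (k : ℕ) : Prop :=
  T ^ k * S * T = T ^ k ∧ S * T * S = S ∧ T * S = S * T

/-- An element of `X⁽²⁾` of rank at most one. -/
def IsDecomp {X : Type*} [AddCommGroup X] [Module ℝ X]
    (A : sym2Space X) : Prop :=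
  ∃ (x : X) (l : ℝ), (A : X ⊗[ℝ] X) = l • (x ⊗ₜ[ℝ] x)

/-!
Drazin invertibility with index at most `k` means `aᵏ ∈ aᵏ⁺¹M ∩ Maᵏ⁺¹` (then `aᵏxᵏ⁺¹` is the
inverse whenever `aᵏ⁺¹x = aᵏ`), which for a linear map is the stabilisation
`range fᵏ = range fᵏ⁺¹`, `ker fᵏ⁺¹ = ker fᵏ`. Since `T = c • P₂ f` and `P₂ = sym2Map` is
multiplicative, the stabilisation for `T` descends to `f`: for kernels because `x ⊗ x = 0` only
for `x = 0`, for ranges by evaluating the quadratic forms `x ⊗ y ↦ φ x φ y`, with `φ` a functional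
vanishing on `range fᵏ⁺¹`. Conversely, `c⁻¹ • P₂ s` satisfies the Drazin equations for `T`
whenever `s` does for `f`, so it is `T`'s Drazin inverse by uniqueness, and it visibly maps
rank-one tensors to rank-one tensors.
-/

def IsDrazinInverse {M : Type*} [Monoid M] (a b : M) (k : ℕ) : Prop :=
  a ^ k * b * a = a ^ k ∧ b * a * b = b ∧ a * b = b * a

lemma drazinTriple_iff {M : Type*} [AddCommGroup M] [Module ℝ M] {T S : Module.End ℝ M} {k : ℕ} :
    DrazinTriple T S k ↔ IsDrazinInverse T S k :=
  Iff.rfl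

namespace IsDrazinInverse

section Monoid

variable {M : Type*} [Monoid M] {a b b' : M} {k k' : ℕ}

lemma commute (h : IsDrazinInverse a b k) : Commute a b := h.2.2

lemma pow_succ_mul (h : IsDrazinInverse a b k) : a ^ (k + 1) * b = a ^ k := by
  rw [pow_succ, mul_assoc, h.2.2, ← mul_assoc, h.1]

lemma mul_pow_succ (h : IsDrazinInverse a b k) : b * a ^ (k + 1) = a ^ k := by
  rw [← (h.commute.pow_left _).eq, h.pow_succ_mul]

lemma pow_succ_mul_pow (h : IsDrazinInverse a b k) (m : ℕ) : b ^ (m + 1) * a ^ m = b := by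
  induction m with
  | zero => simp
  | succ m ih =>
    calc b ^ (m + 1 + 1) * a ^ (m + 1) = b * ((b ^ (m + 1) * a ^ m) * a) := by
          rw [pow_succ' b, pow_succ a]; simp only [mul_assoc]
      _ = b := by rw [ih, ← h.2.2, ← mul_assoc, h.2.1]

lemma pow_mul_pow_succ (h : IsDrazinInverse a b k) (m : ℕ) : a ^ m * b ^ (m + 1) = b := by
  rw [(h.commute.pow_pow _ _).eq, h.pow_succ_mul_pow]

lemma eq_mul_mul_left (h : IsDrazinInverse a b k) (h' : IsDrazinInverse a b' k') :
    b = b * a * b' :=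
  calc b = b ^ (k' + 1) * a ^ k' := (h.pow_succ_mul_pow k').symm
    _ = b ^ (k' + 1) * (a ^ k' * a * b') := by rw [← pow_succ, h'.pow_succ_mul]
    _ = b * a * b' := by simp only [← mul_assoc, h.pow_succ_mul_pow]

lemma eq_mul_mul_right (h : IsDrazinInverse a b k) (h' : IsDrazinInverse a b' k') :
    b = b' * a * b :=
  calc b = a ^ k' * b ^ (k' + 1) := (h.pow_mul_pow_succ k').symm
    _ = b' * a ^ (k' + 1) * b ^ (k' + 1) := by rw [h'.mul_pow_succ]
    _ = b' * a * (a ^ k' * b ^ (k' + 1)) := by rw [pow_succ' a]; simp only [mul_assoc]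
    _ = b' * a * b := by rw [h.pow_mul_pow_succ]

theorem unique (h : IsDrazinInverse a b k) (h' : IsDrazinInverse a b' k') : b = b' :=
  (h.eq_mul_mul_right h').trans (h'.eq_mul_mul_left h).symm

lemma map {N F : Type*} [Monoid N] [FunLike F M N] [MonoidHomClass F M N]
    (h : IsDrazinInverse a b k) (φ : F) : IsDrazinInverse (φ a) (φ b) k := by
  obtain ⟨h₁, h₂, h₃⟩ := h
  refine ⟨?_, ?_, ?_⟩ <;> simp only [← map_pow, ← map_mul, h₁, h₂, h₃]

end Monoid

lemma smul {R A : Type*} [Field R] [Semiring A] [Algebra R A] {a b : A} {k : ℕ}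
    (h : IsDrazinInverse a b k) {c : R} (hc : c ≠ 0) : IsDrazinInverse (c • a) (c⁻¹ • b) k := by
  obtain ⟨h₁, h₂, h₃⟩ := h
  refine ⟨?_, ?_, ?_⟩ <;> simp only [smul_pow, smul_mul_smul_comm, h₁, h₂, h₃]
  · rw [inv_mul_cancel_right₀ hc]
  · rw [inv_mul_cancel₀ hc, one_mul]
  · rw [mul_inv_cancel₀ hc, inv_mul_cancel₀ hc]

end IsDrazinInverse

section Existence

variable {M : Type*} [Monoid M] {a x y : M} {k : ℕ}

lemma pow_add_mul_pow_of_pow_succ_mul_eq (hx : a ^ (k + 1) * x = a ^ k) (m : ℕ) :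
    a ^ (k + m) * x ^ m = a ^ k := by
  induction m with
  | zero => simp
  | succ m ih =>
    calc a ^ (k + (m + 1)) * x ^ (m + 1) = a ^ m * (a ^ (k + 1) * x) * x ^ m := by
          rw [show k + (m + 1) = m + (k + 1) by omega, pow_add a, pow_succ' x]
          simp only [mul_assoc]
      _ = a ^ k := by rw [hx, ← pow_add, add_comm m k, ih]

lemma pow_mul_pow_add_of_mul_pow_succ_eq (hy : y * a ^ (k + 1) = a ^ k) (m : ℕ) :
    y ^ m * a ^ (k + m) = a ^ k := by
  induction m with
  | zero => simp
  | succ m ih =>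
    calc y ^ (m + 1) * a ^ (k + (m + 1)) = y ^ m * (y * a ^ (k + 1)) * a ^ m := by
          rw [show k + (m + 1) = k + 1 + m by omega, pow_add a, pow_succ y]
          simp only [mul_assoc]
      _ = a ^ k := by rw [hy, mul_assoc, ← pow_add, ih]

lemma isDrazinInverse_pow_mul_pow_succ (hx : a ^ (k + 1) * x = a ^ k)
    (hy : y * a ^ (k + 1) = a ^ k) : IsDrazinInverse a (a ^ k * x ^ (k + 1)) k := by
  have hx' := pow_add_mul_pow_of_pow_succ_mul_eq hx
  have hy' := pow_mul_pow_add_of_mul_pow_succ_eq hy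
  have hab : a * (a ^ k * x ^ (k + 1)) = a ^ k * x ^ k := by
    calc a * (a ^ k * x ^ (k + 1)) = a ^ (k + 1) * x * x ^ k := by
          rw [pow_succ' a, pow_succ' x]; simp only [mul_assoc]
      _ = a ^ k * x ^ k := by rw [hx]
  have he : a ^ k * x ^ k = y ^ k * a ^ k := by
    calc a ^ k * x ^ k = y ^ k * a ^ (k + k) * x ^ k := by rw [hy' k]
      _ = y ^ k * a ^ k := by rw [mul_assoc, hx' k]
  have hba : a ^ k * x ^ (k + 1) * a = y ^ k * a ^ k := by
    calc a ^ k * x ^ (k + 1) * a = y ^ (k + 1) * (a ^ (k + (k + 1)) * x ^ (k + 1)) * a := by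
          rw [← mul_assoc (y ^ (k + 1)), hy' (k + 1)]
      _ = y ^ k * a ^ k := by rw [hx' (k + 1), mul_assoc, ← pow_succ, pow_succ, mul_assoc, hy]
  refine ⟨?_, ?_, hab.trans (he.trans hba.symm)⟩
  · rw [mul_assoc, ← hab.trans (he.trans hba.symm), hab, ← mul_assoc, ← pow_add, hx']
  · calc a ^ k * x ^ (k + 1) * a * (a ^ k * x ^ (k + 1))
        = y ^ k * (a ^ k * a ^ k * x ^ k) * x := by
          rw [hba, pow_succ x k]; simp only [mul_assoc]
      _ = a ^ k * x ^ (k + 1) := by rw [← pow_add, hx', ← he, pow_succ x k, mul_assoc]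

theorem exists_isDrazinInverse_iff :
    (∃ b, IsDrazinInverse a b k) ↔ (∃ x, a ^ (k + 1) * x = a ^ k) ∧ ∃ y, y * a ^ (k + 1) = a ^ k :=
  ⟨fun ⟨_, h⟩ ↦ ⟨⟨_, h.pow_succ_mul⟩, ⟨_, h.mul_pow_succ⟩⟩,
    fun ⟨⟨_, hx⟩, ⟨_, hy⟩⟩ ↦ ⟨_, isDrazinInverse_pow_mul_pow_succ hx hy⟩⟩

end Existence

lemma LinearMap.exists_comp_eq_of_range_le {R U V W : Type*} [Ring R] [AddCommGroup U]
    [Module R U] [Module.Projective R U] [AddCommGroup V] [Module R V] [AddCommGroup W]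
    [Module R W] (f : V →ₗ[R] W) (g : U →ₗ[R] W) (h : range g ≤ range f) :
    ∃ u : U →ₗ[R] V, f ∘ₗ u = g := by
  obtain ⟨u, hu⟩ := Module.projective_lifting_property f.rangeRestrict
    (Submodule.inclusion h ∘ₗ g.rangeRestrict) f.surjective_rangeRestrict
  exact ⟨u, ext fun z ↦ congr_arg Subtype.val (LinearMap.congr_fun hu z)⟩

lemma LinearMap.exists_comp_eq_of_ker_le {K U V W : Type*} [DivisionRing K] [AddCommGroup U]
    [Module K U] [AddCommGroup V] [Module K V] [AddCommGroup W] [Module K W] (f : V →ₗ[K] W)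
    (g : V →ₗ[K] U) (h : ker f ≤ ker g) : ∃ v : W →ₗ[K] U, v ∘ₗ f = g := by
  obtain ⟨v, hv⟩ := exists_extend ((ker f).liftQ g h ∘ₗ f.quotKerEquivRange.symm.toLinearMap)
  refine ⟨v, ext fun z ↦ ?_⟩
  simpa using LinearMap.congr_fun hv ⟨f z, mem_range_self f z⟩

theorem Module.End.exists_isDrazinInverse_iff {K V : Type*} [DivisionRing K] [AddCommGroup V]
    [Module K V] {f : Module.End K V} {k : ℕ} :
    (∃ s, IsDrazinInverse f s k) ↔
      LinearMap.range (f ^ k) ≤ LinearMap.range (f ^ (k + 1)) ∧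
        LinearMap.ker (f ^ (k + 1)) ≤ LinearMap.ker (f ^ k) := by
  rw [_root_.exists_isDrazinInverse_iff]
  refine and_congr ⟨?_, fun h ↦ (f ^ (k + 1)).exists_comp_eq_of_range_le _ h⟩
    ⟨?_, fun h ↦ (f ^ (k + 1)).exists_comp_eq_of_ker_le _ h⟩
  · rintro ⟨x, hx⟩
    rw [← hx, Module.End.mul_eq_comp]
    exact LinearMap.range_comp_le_range _ _
  · rintro ⟨y, hy⟩
    rw [← hy, Module.End.mul_eq_comp]
    exact LinearMap.ker_le_ker_comp _ _

section Sym2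

variable {X : Type*} [AddCommGroup X] [Module ℝ X]

lemma map_mem_sym2Space (g : Module.End ℝ X) {t : X ⊗[ℝ] X} (ht : t ∈ sym2Space X) :
    TensorProduct.map g g t ∈ sym2Space X := by
  simp only [sym2Space, LinearMap.mem_eqLocus, LinearEquiv.coe_coe, LinearMap.id_coe,
    id_eq] at ht ⊢
  rw [← TensorProduct.map_comm, ht]

noncomputable def sym2Map : Module.End ℝ X →* Module.End ℝ (sym2Space X) where
  toFun g := (TensorProduct.map g g).restrict fun _ ↦ map_mem_sym2Space g
  map_one' := LinearMap.ext fun _ ↦ Subtype.ext <| by simp [TensorProduct.map_one]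
  map_mul' g h := LinearMap.ext fun _ ↦ Subtype.ext <| by simp [TensorProduct.map_mul]

@[simp]
lemma sym2Map_sq2 (g : Module.End ℝ X) (x : X) : sym2Map g (sq2 x) = sq2 (g x) := rfl

lemma span_range_sq2 : Submodule.span ℝ (Set.range (sq2 : X → sym2Space X)) = ⊤ := by
  set Q := Submodule.span ℝ (Set.range fun x : X ↦ x ⊗ₜ[ℝ] x)
  have hQ : ∀ x : X, x ⊗ₜ[ℝ] x ∈ Q := fun x ↦ Submodule.subset_span ⟨x, rfl⟩
  have hsymm : ∀ t : X ⊗[ℝ] X, t + TensorProduct.comm ℝ X X t ∈ Q := by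
    intro t
    induction t using TensorProduct.induction_on with
    | zero => simp
    | tmul x y =>
      have polarization : x ⊗ₜ[ℝ] y + y ⊗ₜ[ℝ] x
          = (x + y) ⊗ₜ[ℝ] (x + y) - x ⊗ₜ[ℝ] x - y ⊗ₜ[ℝ] y := by
        simp only [TensorProduct.tmul_add, TensorProduct.add_tmul]; abel
      rw [TensorProduct.comm_tmul, polarization]
      exact Q.sub_mem (Q.sub_mem (hQ _) (hQ _)) (hQ _)
    | add t u ht hu =>
      rw [map_add, add_add_add_comm]
      exact Q.add_mem ht hu
  refine eq_top_iff.2 fun A _ ↦ ?_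
  have hA : (A : X ⊗[ℝ] X) ∈ Q := by
    have h2A := Q.smul_mem (2⁻¹ : ℝ) (hsymm A)
    rwa [show TensorProduct.comm ℝ X X A = A from A.2, ← two_smul ℝ, smul_smul,
      inv_mul_cancel₀ two_ne_zero, one_smul] at h2A
  have hQ_eq : Q = (Submodule.span ℝ (Set.range sq2)).map (sym2Space X).subtype := by
    rw [Submodule.map_span, ← Set.range_comp]; rfl
  obtain ⟨B, hB, hBA⟩ := hQ_eq ▸ hA
  rwa [← Subtype.ext hBA]

lemma sym2Space.linearMap_ext {M : Type*} [AddCommGroup M] [Module ℝ M]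
    {g h : sym2Space X →ₗ[ℝ] M} (H : ∀ x, g (sq2 x) = h (sq2 x)) : g = h :=
  LinearMap.ext_on_range span_range_sq2 H

noncomputable def sym2Eval (φ : Module.Dual ℝ X) : sym2Space X →ₗ[ℝ] ℝ :=
  LinearMap.mul' ℝ ℝ ∘ₗ TensorProduct.map φ φ ∘ₗ (sym2Space X).subtype

@[simp]
lemma sym2Eval_sq2 (φ : Module.Dual ℝ X) (x : X) : sym2Eval φ (sq2 x) = φ x * φ x := by
  simp [sym2Eval, sq2]

lemma sq2_eq_zero_iff {x : X} : sq2 x = 0 ↔ x = 0 := by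
  refine ⟨fun h ↦ ?_, fun h ↦ by simp [h, sq2]⟩
  rw [← Module.forall_dual_apply_eq_zero_iff ℝ x]
  intro φ
  simpa [h] using (sym2Eval_sq2 φ x).symm

lemma ker_le_ker_of_sym2Map {g h : Module.End ℝ X}
    (H : LinearMap.ker (sym2Map g) ≤ LinearMap.ker (sym2Map h)) :
    LinearMap.ker g ≤ LinearMap.ker h := by
  intro x hx
  have : sq2 x ∈ LinearMap.ker (sym2Map g) := by simpa [sq2_eq_zero_iff] using hx
  simpa [sq2_eq_zero_iff] using H this

lemma range_le_range_of_sym2Map {g h : Module.End ℝ X}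
    (H : LinearMap.range (sym2Map g) ≤ LinearMap.range (sym2Map h)) :
    LinearMap.range g ≤ LinearMap.range h := by
  rintro _ ⟨x, rfl⟩
  by_contra hx
  obtain ⟨φ, hφx, hφ⟩ := Submodule.exists_dual_map_eq_bot_of_notMem hx inferInstance
  have hφh : sym2Eval φ ∘ₗ sym2Map h = 0 := sym2Space.linearMap_ext fun z ↦ by
    have : φ (h z) ∈ (LinearMap.range h).map φ := Submodule.mem_map_of_mem ⟨z, rfl⟩
    simp_all
  obtain ⟨A, hA⟩ := H ⟨sq2 x, rfl⟩
  simpa [hA, hφx] using LinearMap.congr_fun hφh A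

lemma exists_isDrazinInverse_of_sym2Map {f : Module.End ℝ X} {k : ℕ}
    (h : ∃ S, IsDrazinInverse (sym2Map f) S k) : ∃ s, IsDrazinInverse f s k := by
  rw [Module.End.exists_isDrazinInverse_iff] at h ⊢
  simp only [← map_pow] at h
  exact ⟨range_le_range_of_sym2Map h.1, ker_le_ker_of_sym2Map h.2⟩

end Sym2

theorem stmt17 {X : Type*} [AddCommGroup X] [Module ℝ X]
    (c : ℝ) (hc : c ≠ 0) (f : Module.End ℝ X)
    (T : Module.End ℝ (sym2Space X))
    (hT : ∀ x : X, ((T (sq2 x) : sym2Space X) : X ⊗[ℝ] X) = c • (f x ⊗ₜ[ℝ] f x))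
    (k : ℕ) (hDrazin : ∃ S, DrazinTriple T S k) :
    (∃ s, DrazinTriple f s k) ∧
    (∀ S, DrazinTriple T S k → ∀ s k', DrazinTriple f s k' →
      ∀ x : X, ((S (sq2 x) : sym2Space X) : X ⊗[ℝ] X) = c⁻¹ • (s x ⊗ₜ[ℝ] s x)) ∧
    ((∀ A : sym2Space X, IsDecomp A → IsDecomp (T A)) →
      ∀ S, DrazinTriple T S k → ∀ A : sym2Space X, IsDecomp A → IsDecomp (S A)) := by
  simp only [drazinTriple_iff] at hDrazin ⊢
  obtain rfl : T = c • sym2Map f := sym2Space.linearMap_ext fun x ↦ Subtype.ext (hT x)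
  have hS_eq : ∀ S, IsDrazinInverse (c • sym2Map f) S k → ∀ s k', IsDrazinInverse f s k' →
      S = c⁻¹ • sym2Map s :=
    fun S hS s k' hs ↦ hS.unique ((hs.map sym2Map).smul hc)
  have hS_sq2 : ∀ S, IsDrazinInverse (c • sym2Map f) S k → ∀ s k', IsDrazinInverse f s k' →
      ∀ x : X, ((S (sq2 x) : sym2Space X) : X ⊗[ℝ] X) = c⁻¹ • (s x ⊗ₜ[ℝ] s x) :=
    fun S hS s k' hs x ↦ by rw [hS_eq S hS s k' hs]; rfl
  obtain ⟨S, hS⟩ := hDrazin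
  obtain ⟨s, hs⟩ := exists_isDrazinInverse_of_sym2Map
    ⟨c • S, by simpa [hc] using hS.smul (inv_ne_zero hc)⟩
  refine ⟨⟨s, hs⟩, hS_sq2, fun _ S hS A ⟨x, l, hA⟩ ↦ ⟨s x, l * c⁻¹, ?_⟩⟩
  obtain rfl : A = l • sq2 x := Subtype.ext hA
  rw [map_smul, Submodule.coe_smul, hS_sq2 S hS s k hs x, smul_smul]
end
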